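/- Let d ≥ 1 be an integer. There exists c₀ > 0 (depending only on d) such that for all 0 < α < c₀, δ > 0 and P_δ > 0 the following holds: if U is continuously differentiable on (0,δ] with (α/2)·r ≤ U(r) ≤ (3α/2)·r and α/2 ≤ U'(r) ≤ 3α/2 for all r ∈ (0,δ], and P(r) := P_δ · exp(−∫_r^δ (U'(s) + (d−1)U(s)/s)/(s/2 − U(s)) ds), then for every r ∈ (0,δ]: (r/δ)^{4dα} P_δ ≤ P(r) ≤ (r/δ)^{dα} P_δ. -/
import Mathlib


open Real MeasureTheory Set

noncomputable section

/-- `P(r) = P_δ exp(−∫_r^δ (U'+(d−1)U/s)/(s/2−U) ds)`, written as an oriented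
interval integral from `δ` to `r`. -/
def Pvac (d : ℕ) (δ Pδ : ℝ) (U : ℝ → ℝ) (r : ℝ) : ℝ :=
  Pδ * Real.exp (∫ s in δ..r, (deriv U s + ((d : ℝ) - 1) * U s / s) / (s / 2 - U s))

/-- Power-law bounds on the cavitating density near the origin:
`(r/δ)^{4dα} P_δ ≤ P(r) ≤ (r/δ)^{dα} P_δ` on `(0,δ]`. -/
theorem vacuum_density_powerlaw (d : ℕ) (hd : 1 ≤ d) :
    ∃ c0 > (0:ℝ), ∀ α δ Pδ : ℝ, 0 < α → α < c0 → 0 < δ → 0 < Pδ →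
      ∀ U : ℝ → ℝ, ContDiffOn ℝ 1 U (Ioc 0 δ) →
      (∀ r ∈ Ioc (0:ℝ) δ,
        α / 2 * r ≤ U r ∧ U r ≤ 3 * α / 2 * r ∧
        α / 2 ≤ deriv U r ∧ deriv U r ≤ 3 * α / 2) →
      ∀ r ∈ Ioc (0:ℝ) δ,
        (r / δ) ^ (4 * (d : ℝ) * α) * Pδ ≤ Pvac d δ Pδ U r ∧
        Pvac d δ Pδ U r ≤ (r / δ) ^ ((d : ℝ) * α) * Pδ := by
  refine ⟨1/12, by norm_num, ?_⟩
  intro α δ Pδ hα hα12 hδ hPδ U hU hB r hr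
  obtain ⟨hr0, hrδ⟩ := hr
  have hd1 : (1:ℝ) ≤ (d:ℝ) := by exact_mod_cast hd
  set F : ℝ → ℝ := fun s => (deriv U s + ((d : ℝ) - 1) * U s / s) / (s / 2 - U s) with hF
  have key : ∀ s ∈ Icc r δ, (d:ℝ) * α / s ≤ F s ∧ F s ≤ 4 * (d:ℝ) * α / s := by
    intro s hs
    have hs0 : 0 < s := lt_of_lt_of_le hr0 hs.1
    obtain ⟨h1, h2, h3, h4⟩ := hB s ⟨hs0, hs.2⟩
    have hDpos : 0 < s / 2 - U s := by nlinarith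
    have hlo : ((d:ℝ)-1) * (α/2) ≤ ((d:ℝ)-1) * U s / s := by
      rw [le_div_iff₀ hs0]; nlinarith
    have hhi : ((d:ℝ)-1) * U s / s ≤ ((d:ℝ)-1) * (3*α/2) := by
      rw [div_le_iff₀ hs0]; nlinarith
    constructor
    · rw [hF, div_le_div_iff₀ hs0 hDpos]; nlinarith
    · rw [hF, div_le_div_iff₀ hDpos hs0]
      have hdpos : (0:ℝ) < (d:ℝ) := by linarith
      nlinarith [mul_le_mul_of_nonneg_right (show deriv U s + ((d:ℝ)-1) * U s / s ≤ 3*(d:ℝ)*α/2 by nlinarith) hs0.le,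
        mul_le_mul_of_nonneg_left h2 (show (0:ℝ) ≤ 4*(d:ℝ)*α by positivity),
        mul_pos (mul_pos hdpos hα) hs0]
  have hF0 : ∀ s ∈ Icc r δ, 0 ≤ F s := by
    intro s hs
    have hs0 : 0 < s := lt_of_lt_of_le hr0 hs.1
    have h0 : 0 ≤ (d:ℝ) * α / s := by positivity
    linarith [(key s hs).1]
  have hsub : Set.uIoc r δ ⊆ Icc r δ := by
    rw [Set.uIoc_of_le hrδ]; exact Ioc_subset_Icc_self
  have hcont : ∀ c : ℝ, IntervalIntegrable (fun s => c / s) volume r δ := by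
    intro c
    apply ContinuousOn.intervalIntegrable
    apply ContinuousOn.div continuousOn_const continuousOn_id
    intro x hx
    rw [Set.uIcc_of_le hrδ] at hx
    exact ne_of_gt (lt_of_lt_of_le hr0 hx.1)
  have hUm : AEStronglyMeasurable U (volume.restrict (Set.uIoc r δ)) := by
    have hc : ContinuousOn U (Icc r δ) :=
      (hU.continuousOn).mono (fun x hx => ⟨lt_of_lt_of_le hr0 hx.1, hx.2⟩)
    exact (hc.aestronglyMeasurable measurableSet_Icc).mono_measure
      (Measure.restrict_mono hsub le_rfl)
  have hFm : AEStronglyMeasurable F (volume.restrict (Set.uIoc r δ)) := by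
    have hUam : AEMeasurable U (volume.restrict (Set.uIoc r δ)) := hUm.aemeasurable
    exact (((measurable_deriv U).aemeasurable.add
        ((hUam.const_mul _).div aemeasurable_id)).div
        ((aemeasurable_id.div aemeasurable_const).sub hUam)).aestronglyMeasurable
  have hFi : IntervalIntegrable F volume r δ := by
    apply (hcont (4 * (d:ℝ) * α)).mono_fun' hFm
    filter_upwards [ae_restrict_mem measurableSet_uIoc] with x hx
    have hx' := hsub hx
    rw [Real.norm_eq_abs, abs_of_nonneg (hF0 x hx')]
    exact (key x hx').2
  set I := ∫ s in r..δ, F s with hI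
  have hlogs : ∀ c : ℝ, (∫ s in r..δ, c / s) = c * Real.log (δ / r) := by
    intro c
    simp only [div_eq_mul_one_div c]
    rw [intervalIntegral.integral_const_mul, integral_one_div_of_pos hr0 hδ]
  have hIlo : (d:ℝ) * α * Real.log (δ / r) ≤ I := by
    rw [← hlogs]
    exact intervalIntegral.integral_mono_on hrδ (hcont _) hFi (fun x hx => (key x hx).1)
  have hIhi : I ≤ 4 * (d:ℝ) * α * Real.log (δ / r) := by
    rw [← hlogs]
    exact intervalIntegral.integral_mono_on hrδ hFi (hcont _) (fun x hx => (key x hx).2)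
  have hPv : Pvac d δ Pδ U r = Pδ * Real.exp (-I) := by
    rw [Pvac, hI, intervalIntegral.integral_symm]
  have hrδpos : 0 < r / δ := div_pos hr0 hδ
  have hlogrδ : Real.log (r / δ) = -Real.log (δ / r) := by
    rw [Real.log_div hr0.ne' hδ.ne', Real.log_div hδ.ne' hr0.ne']; ring
  constructor
  · rw [hPv, Real.rpow_def_of_pos hrδpos, hlogrδ, mul_comm _ Pδ]
    apply mul_le_mul_of_nonneg_left _ hPδ.le
    apply Real.exp_le_exp.2
    nlinarith
  · rw [hPv, Real.rpow_def_of_pos hrδpos, hlogrδ, mul_comm _ Pδ]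
    apply mul_le_mul_of_nonneg_left _ hPδ.le
    apply Real.exp_le_exp.2
    nlinarith
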